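/- Let a be an ideal of a commutative Noetherian domain R and let 0 → L →f M →g N → 0 be an e-exact sequence of R-modules. Then the sequence 0 → Γ_a(L) → Γ_a(M) → Γ_a(N) obtained by restricting f and g to a-torsion submodules is e-exact, i.e., Γ_a(f) is injective and Im(Γ_a(f)) is essential in Ker(Γ_a(g)). -/
import Mathlib


universe u

variable {R : Type u} [CommRing R]

/-- The `a`-torsion submodule `Γ_a(M) = {x : aⁿ • x = 0 for some n ≥ 1}`. -/
def gammaTorsion (a : Ideal R) (M : Type u) [AddCommGroup M] [Module R M] : Submodule R M :=
  ⨆ n : ℕ, Submodule.torsionBySet R M ((a ^ (n + 1) : Ideal R) : Set R)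

/-- `N` is an essential submodule of `N'` (both submodules of `M`). -/
def EssentialIn {M : Type u} [AddCommGroup M] [Module R M] (N N' : Submodule R M) : Prop :=
  N ≤ N' ∧ ∀ K : Submodule R M, K ≤ N' → K ≠ ⊥ → N ⊓ K ≠ ⊥

lemma gamma_directed (a : Ideal R) (M : Type u) [AddCommGroup M] [Module R M] :
    Monotone fun n : ℕ => Submodule.torsionBySet R M ((a ^ (n + 1) : Ideal R) : Set R) := by
  intro m n hmn
  apply Submodule.torsionBySet_le_torsionBySet_of_subset
  exact Ideal.pow_le_pow_right (by omega)

lemma mem_gammaTorsion_iff (a : Ideal R) {M : Type u} [AddCommGroup M] [Module R M] (x : M) :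
    x ∈ gammaTorsion a M ↔ ∃ n : ℕ, ∀ s ∈ a ^ (n + 1), s • x = 0 := by
  rw [gammaTorsion, Submodule.mem_iSup_of_directed _ (gamma_directed a M).directed_le]
  constructor
  · rintro ⟨n, hn⟩
    exact ⟨n, fun s hs => (Submodule.mem_torsionBySet_iff _ _).mp hn ⟨s, hs⟩⟩
  · rintro ⟨n, hn⟩
    exact ⟨n, (Submodule.mem_torsionBySet_iff _ _).mpr fun ⟨s, hs⟩ => hn s hs⟩

/-- the torsion functor `Γ_a` is left e-exact: applying it to an e-exact
sequence `0 → L → M → N → 0` gives an e-exact sequence `0 → Γ_a(L) → Γ_a(M) → Γ_a(N)`. -/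
theorem gamma_left_eExact [IsDomain R] [IsNoetherianRing R] (a : Ideal R)
    {L M N : Type u} [AddCommGroup L] [AddCommGroup M] [AddCommGroup N]
    [Module R L] [Module R M] [Module R N]
    (f : L →ₗ[R] M) (g : M →ₗ[R] N)
    (hf : Function.Injective f)
    (hmid : EssentialIn (R := R) (LinearMap.range f) (LinearMap.ker g))
    (him : EssentialIn (R := R) (LinearMap.range g) (⊤ : Submodule R N)) :
    -- Γ_a(f) is injective (f restricted to the torsion submodules)
    (∀ x y : gammaTorsion a L, f x = f y → x = y) ∧
    -- the image of Γ_a(f) lies in, and is essential in, the kernel of Γ_a(g)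
    EssentialIn (R := R) (Submodule.map f (gammaTorsion a L))
      (LinearMap.ker g ⊓ gammaTorsion a M) := by
  refine ⟨fun x y h => Subtype.ext (hf h), ?_, ?_⟩
  · -- image lies inside
    rintro _ ⟨l, hl, rfl⟩
    refine ⟨hmid.1 ⟨l, rfl⟩, ?_⟩
    simp only [SetLike.mem_coe] at hl ⊢
    rw [mem_gammaTorsion_iff] at hl ⊢
    obtain ⟨n, hn⟩ := hl
    exact ⟨n, fun s hs => by rw [← map_smul, hn s hs, map_zero]⟩
  · -- essentiality
    intro K hK hKne
    obtain ⟨x, hxK, hx0⟩ := Submodule.exists_mem_ne_zero_of_ne_bot hKne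
    have hxg : x ∈ LinearMap.ker g := (hK hxK).1
    have hxt := (hK hxK).2
    rw [SetLike.mem_coe, mem_gammaTorsion_iff] at hxt
    obtain ⟨n, hn⟩ := hxt
    -- consider the cyclic submodule generated by x inside ker g
    have hspan : Submodule.span R {x} ≤ LinearMap.ker g := by
      rw [Submodule.span_le, Set.singleton_subset_iff]; exact hxg
    have hspan0 : Submodule.span R {x} ≠ ⊥ := by
      simp only [ne_eq, Submodule.span_singleton_eq_bot]; exact hx0
    have := hmid.2 _ hspan hspan0
    obtain ⟨y, hy, hy0⟩ := Submodule.exists_mem_ne_zero_of_ne_bot this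
    obtain ⟨⟨l, hl⟩, hy2⟩ := hy
    obtain ⟨r, rfl⟩ := Submodule.mem_span_singleton.mp hy2
    -- y = r • x = f l, and a^(n+1) kills y, hence kills l
    have hlt : l ∈ gammaTorsion a L := by
      rw [mem_gammaTorsion_iff]
      refine ⟨n, fun s hs => hf ?_⟩
      rw [map_smul, hl, map_zero, smul_comm, hn s hs, smul_zero]
    intro hbot
    apply hy0
    have : r • x ∈ Submodule.map f (gammaTorsion a L) ⊓ K :=
      ⟨⟨l, hlt, hl⟩, K.smul_mem r hxK⟩
    simpa [hbot] using this
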